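/- arXiv:2205.10700 — 8 statements merged into one kernel-verified Lean document; each statement's English description precedes it below -/
import Mathlib

section
/- Let a and b be elements of a group that generate a free subgroup of rank 2 (i.e., ⟨a,b⟩ ≅ ⟨a⟩ * ⟨b⟩ ≅ F₂). If i, j, ℓ, n are nonzero integers and k, ℓ' are integers such that (a^k b^ℓ)^i = (a^n b^{ℓ'})^j, then k = n, ℓ = ℓ', and i = j. -/
/-!
Pull the equation back to the free group on `x = a`, `y = b`. Exponent sums give `k i = n j` and
`ℓ i = ℓ' j`, so `k ≠ 0 ≠ ℓ'`. Since each generator occurs in `x^k y^ℓ` with a single sign, this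
word is cyclically reduced, and for `m > 0` the reduced word of `(x^k y^ℓ)^m` is
`x^k y^ℓ x^k y^ℓ ⋯`; when `ℓ ≠ 0` its maximal initial run of `x`-letters is exactly `x^k`.
After making `i > 0`, comparing these runs gives `k = n` if `j > 0`, and a contradiction if
`j < 0`, because then the right side is a positive power of `y^(-ℓ') x^(-n)`, whose run is empty.
The exponent sums now force `i = j` and `ℓ = ℓ'`.
-/

open List Multiplicative

namespace FreeGroup

variable {α : Type*}

theorem zpow_right_injective_of (x : α) : Function.Injective fun k : ℤ ↦ of x ^ k :=
  injective_zpow_iff_not_isOfFinOrder.2 (not_isOfFinOrder_of_isMulTorsionFree (of_ne_one x))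

theorem isCyclicallyReduced_of_forall_mem {L : List (α × Bool)}
    (h : ∀ a ∈ L, ∀ b ∈ L, a.1 = b.1 → a.2 = b.2) : IsCyclicallyReduced L :=
  ⟨(pairwise_of_forall_mem_list h).isChain, fun a ha b hb ↦
    h a (mem_of_getLast? ha) b (mem_of_mem_head? hb)⟩

theorem toWord_pow_of_isCyclicallyReduced [DecidableEq α] {w : FreeGroup α}
    (h : IsCyclicallyReduced w.toWord) (m : ℕ) :
    (w ^ m).toWord = (replicate m w.toWord).flatten := by
  rw [toWord_pow, (h.flatten_replicate m).isReduced.reduce_eq]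

variable [DecidableEq α]

theorem toWord_of_zpow (x : α) (k : ℤ) :
    (of x ^ k).toWord = replicate k.natAbs (x, decide (0 ≤ k)) := by
  obtain ⟨m, rfl | rfl⟩ := Int.eq_nat_or_neg k
  · simp
  · simpa [invRev] using em (m = 0)

variable {x y : α}

theorem isCyclicallyReduced_toWord_of_zpow_append (hxy : x ≠ y) (k ℓ : ℤ) :
    IsCyclicallyReduced ((of x ^ k).toWord ++ (of y ^ ℓ).toWord) := by
  refine isCyclicallyReduced_of_forall_mem ?_
  simp only [toWord_of_zpow, mem_append, mem_replicate]
  rintro _ (⟨-, rfl⟩ | ⟨-, rfl⟩) _ (⟨-, rfl⟩ | ⟨-, rfl⟩) h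
  all_goals simp_all

theorem toWord_of_zpow_mul_of_zpow (hxy : x ≠ y) (k ℓ : ℤ) :
    (of x ^ k * of y ^ ℓ).toWord = (of x ^ k).toWord ++ (of y ^ ℓ).toWord := by
  rw [toWord_mul, (isCyclicallyReduced_toWord_of_zpow_append hxy k ℓ).isReduced.reduce_eq]

theorem exists_toWord_pow_eq_append (hxy : x ≠ y) (k ℓ : ℤ) {m : ℕ} (hm : m ≠ 0) :
    ∃ rest, ((of x ^ k * of y ^ ℓ) ^ m).toWord =
      (of x ^ k).toWord ++ (of y ^ ℓ).toWord ++ rest := by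
  obtain ⟨m, rfl⟩ := Nat.exists_eq_succ_of_ne_zero hm
  rw [toWord_pow_of_isCyclicallyReduced, toWord_of_zpow_mul_of_zpow hxy, replicate_succ,
    flatten_cons]
  · exact ⟨_, rfl⟩
  · rw [toWord_of_zpow_mul_of_zpow hxy]
    exact isCyclicallyReduced_toWord_of_zpow_append hxy k ℓ

theorem takeWhile_toWord_of_zpow_append {ℓ : ℤ} (hxy : x ≠ y) (hℓ : ℓ ≠ 0)
    (L : List (α × Bool)) : ((of y ^ ℓ).toWord ++ L).takeWhile (·.1 = x) = [] := by
  obtain ⟨m, hm⟩ := Nat.exists_eq_succ_of_ne_zero (Int.natAbs_ne_zero.2 hℓ)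
  rw [toWord_of_zpow, hm, replicate_succ, cons_append,
    takeWhile_cons_of_neg (by simpa using hxy.symm)]

theorem takeWhile_toWord_pow_of_zpow_mul_of_zpow {ℓ : ℤ} (hxy : x ≠ y) (k : ℤ) (hℓ : ℓ ≠ 0)
    {m : ℕ} (hm : m ≠ 0) :
    ((of x ^ k * of y ^ ℓ) ^ m).toWord.takeWhile (·.1 = x) = (of x ^ k).toWord := by
  obtain ⟨rest, h⟩ := exists_toWord_pow_eq_append hxy k ℓ hm
  rw [h, append_assoc, takeWhile_append_of_pos, takeWhile_toWord_of_zpow_append hxy hℓ,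
    append_nil]
  simp [toWord_of_zpow]

theorem takeWhile_toWord_pow_of_zpow_mul_of_zpow_eq_nil {ℓ : ℤ} (hxy : x ≠ y) (k : ℤ)
    (hℓ : ℓ ≠ 0) {m : ℕ} (hm : m ≠ 0) :
    ((of y ^ ℓ * of x ^ k) ^ m).toWord.takeWhile (·.1 = x) = [] := by
  obtain ⟨rest, h⟩ := exists_toWord_pow_eq_append hxy.symm ℓ k hm
  rw [h, append_assoc, takeWhile_toWord_of_zpow_append hxy hℓ]

theorem left_exponent_eq_of_zpow_eq_zpow {k ℓ n ℓ' i j : ℤ} (hxy : x ≠ y) (hk : k ≠ 0)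
    (hℓ : ℓ ≠ 0) (hℓ' : ℓ' ≠ 0) (hi : i ≠ 0) (hj : j ≠ 0)
    (h : (of x ^ k * of y ^ ℓ) ^ i = (of x ^ n * of y ^ ℓ') ^ j) : k = n := by
  wlog hi_pos : 0 < i generalizing i j
  · exact this (neg_ne_zero.2 hi) (neg_ne_zero.2 hj) (by rw [zpow_neg, zpow_neg, h]) (by omega)
  lift i to ℕ using hi_pos.le
  have hi' : i ≠ 0 := by exact_mod_cast hi
  rcases hj.lt_or_gt with hj_neg | hj_pos
  · obtain ⟨j, rfl⟩ := Int.exists_eq_neg_ofNat hj_neg.le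
    have hj' : j ≠ 0 := by omega
    rw [zpow_natCast, zpow_neg, ← inv_zpow, mul_inv_rev, ← zpow_neg, ← zpow_neg,
      zpow_natCast] at h
    have := congrArg (fun w ↦ w.toWord.takeWhile (·.1 = x)) h
    simp only [takeWhile_toWord_pow_of_zpow_mul_of_zpow hxy k hℓ hi',
      takeWhile_toWord_pow_of_zpow_mul_of_zpow_eq_nil hxy _ (neg_ne_zero.2 hℓ') hj',
      toWord_eq_nil_iff] at this
    exact absurd (zpow_right_injective_of x (this.trans (zpow_zero _).symm)) hk
  · lift j to ℕ using hj_pos.le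
    have hj' : j ≠ 0 := by exact_mod_cast hj
    rw [zpow_natCast, zpow_natCast] at h
    have := congrArg (fun w ↦ w.toWord.takeWhile (·.1 = x)) h
    simp only [takeWhile_toWord_pow_of_zpow_mul_of_zpow hxy _ hℓ hi',
      takeWhile_toWord_pow_of_zpow_mul_of_zpow hxy _ hℓ' hj'] at this
    exact zpow_right_injective_of x (toWord_injective this)

def exponentSum (z : α) : FreeGroup α →* Multiplicative ℤ :=
  lift (Pi.mulSingle z (ofAdd 1))

theorem toAdd_exponentSum_zpow_of_zpow_mul_of_zpow (hxy : x ≠ y) (k ℓ i : ℤ) :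
    toAdd (exponentSum x ((of x ^ k * of y ^ ℓ) ^ i)) = k * i ∧
      toAdd (exponentSum y ((of x ^ k * of y ^ ℓ) ^ i)) = ℓ * i := by
  simp [exponentSum, hxy, hxy.symm, mul_comm]

theorem exponents_eq_of_zpow_eq_zpow {k ℓ n ℓ' i j : ℤ} (hxy : x ≠ y) (hℓ : ℓ ≠ 0)
    (hn : n ≠ 0) (hi : i ≠ 0) (hj : j ≠ 0)
    (h : (of x ^ k * of y ^ ℓ) ^ i = (of x ^ n * of y ^ ℓ') ^ j) :
    k = n ∧ ℓ = ℓ' ∧ i = j := by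
  obtain ⟨hx_sum, hy_sum⟩ : k * i = n * j ∧ ℓ * i = ℓ' * j := by
    have hx := toAdd_exponentSum_zpow_of_zpow_mul_of_zpow hxy k ℓ i
    have hy := toAdd_exponentSum_zpow_of_zpow_mul_of_zpow hxy n ℓ' j
    rw [h] at hx
    exact ⟨hx.1.symm.trans hy.1, hx.2.symm.trans hy.2⟩
  have hk : k ≠ 0 := left_ne_zero_of_mul (hx_sum ▸ mul_ne_zero hn hj)
  have hℓ' : ℓ' ≠ 0 := left_ne_zero_of_mul (hy_sum ▸ mul_ne_zero hℓ hi)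
  obtain rfl := left_exponent_eq_of_zpow_eq_zpow hxy hk hℓ hℓ' hi hj h
  obtain rfl := mul_left_cancel₀ hk hx_sum
  exact ⟨rfl, mul_right_cancel₀ hi hy_sum, rfl⟩

end FreeGroup

/-- If `a, b` generate a free subgroup of rank 2 and
`(a^k b^ℓ)^i = (a^n b^{ℓ'})^j` with `i, j, ℓ, n` nonzero, then `k = n`, `ℓ = ℓ'`, `i = j`. -/
theorem same_power {G : Type*} [Group G] (a b : G)
    (hfree : Function.Injective (FreeGroup.lift (fun x : Bool => if x then a else b)))
    (i j ℓ n k ℓ' : ℤ) (hi : i ≠ 0) (hj : j ≠ 0) (hℓ : ℓ ≠ 0) (hn : n ≠ 0)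
    (heq : (a ^ k * b ^ ℓ) ^ i = (a ^ n * b ^ ℓ') ^ j) :
    k = n ∧ ℓ = ℓ' ∧ i = j :=
  FreeGroup.exponents_eq_of_zpow_eq_zpow (x := true) (y := false) (by decide) hℓ hn hi hj
    (hfree (by simpa using heq))
end

section
/- Let Γ be a torsion-free group in which the centralizer of every nontrivial element is cyclic. Then Γ has the unique root property: for all s, t ∈ Γ and every positive integer n, s^n = t^n implies s = t. -/
/-! Any `m`-th root of `g = s ^ m` commutes with `g`, so when `g ≠ 1` all `m`-th roots of `g`
lie in the cyclic, hence abelian, centralizer of `g`. Two commuting roots `s`, `t` satisfy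
`(s * t⁻¹) ^ m = 1`, and torsion-freeness forces `s = t`. -/

/-- Old Mathlib `Monoid.IsTorsionFree` (removed): no nontrivial element has finite order. -/
def Monoid.IsTorsionFree (G : Type*) [Monoid G] : Prop :=
  ∀ g : G, g ≠ 1 → ¬IsOfFinOrder g

section

variable {G : Type*} [Group G]

theorem Monoid.IsTorsionFree.eq_one_of_pow_eq_one (htf : Monoid.IsTorsionFree G) {g : G}
    {n : ℕ} (hn : n ≠ 0) (h : g ^ n = 1) : g = 1 :=
  of_not_not fun hg ↦ htf g hg (isOfFinOrder_iff_pow_eq_one.2 ⟨n, Nat.pos_of_ne_zero hn, h⟩)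

theorem Monoid.IsTorsionFree.eq_of_commute_of_pow_eq_pow (htf : Monoid.IsTorsionFree G)
    {s t : G} (hst : Commute s t) {n : ℕ} (hn : n ≠ 0) (h : s ^ n = t ^ n) : s = t := by
  have hquot : (s * t⁻¹) ^ n = 1 := by
    rw [hst.inv_right.mul_pow, inv_pow, h, mul_inv_cancel]
  exact mul_inv_eq_one.1 (htf.eq_one_of_pow_eq_one hn hquot)

theorem commute_of_pow_eq_pow {s t : G} {n : ℕ}
    [IsMulCommutative (Subgroup.centralizer {s ^ n})] (h : s ^ n = t ^ n) : Commute s t := by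
  have hs : s ∈ Subgroup.centralizer {s ^ n} :=
    Subgroup.mem_centralizer_singleton_iff.2 (pow_mul_comm' s n).symm
  have ht : t ∈ Subgroup.centralizer {s ^ n} :=
    Subgroup.mem_centralizer_singleton_iff.2 (h ▸ (pow_mul_comm' t n).symm)
  exact setLike_mul_comm hs ht

end

/-- A torsion-free group with cyclic centralizers of nontrivial elements
has the unique root property. -/
theorem unique_root_of_cyclic_centralizers {Γ : Type*} [Group Γ]
    (htf : Monoid.IsTorsionFree Γ)
    (hcyc : ∀ g : Γ, g ≠ 1 → IsCyclic (Subgroup.centralizer {g})) :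
    ∀ s t : Γ, ∀ m : ℕ, 0 < m → s ^ m = t ^ m → s = t := by
  intro s t m hm h
  have hst : Commute s t := by
    by_cases hg : s ^ m = 1
    · rw [htf.eq_one_of_pow_eq_one hm.ne' hg]
      exact Commute.one_left t
    · have := hcyc _ hg
      exact commute_of_pow_eq_pow h
  exact htf.eq_of_commute_of_pow_eq_pow hst hm.ne' h
end

section
/- Let Γ be a group and g ∈ Γ an element of infinite order. Then the virtual centralizer of the cyclic subgroup ⟨g⟩ in Γ equals the union ⋃_{i ≥ 1} C_Γ(g^i) of the centralizers of positive powers of g. -/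
/-! Conjugating `x` by `g ^ n` gives the same element for `n = m` and `n = m + d` exactly when
`g ^ d` commutes with `x`. So `n ↦ g ^ n * x * g ^ (-n)` has finite range iff it is periodic
(a map on `ℤ` with finite range is not injective, and a periodic one takes only the values on a
period), iff some nonzero power of `g`, hence some positive one, commutes with `x`. -/

open Function Set

section ConjZPow

variable {Γ : Type*} [Group Γ]

lemma zpow_mul_mul_zpow_neg_eq_iff_commute (g x : Γ) (m n : ℤ) :
    g ^ m * x * g ^ (-m) = g ^ n * x * g ^ (-n) ↔ Commute (g ^ (m - n)) x := by
  have hm : g ^ m * x * g ^ (-m) = g ^ n * (g ^ (m - n) * x * (g ^ (m - n))⁻¹) * g ^ (-n) := by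
    group
  rw [hm, mul_left_inj, mul_right_inj, mul_inv_eq_iff_eq_mul]
  rfl

lemma periodic_zpow_mul_mul_zpow_neg_of_commute {g x : Γ} {k : ℤ} (h : Commute (g ^ k) x) :
    Periodic (fun n : ℤ => g ^ n * x * g ^ (-n)) k := fun n =>
  (zpow_mul_mul_zpow_neg_eq_iff_commute g x (n + k) n).mpr (by rwa [add_sub_cancel_left])

lemma Commute.exists_pow_of_zpow {g x : Γ} {d : ℤ} (hd : d ≠ 0) (h : Commute (g ^ d) x) :
    ∃ i : ℕ, 1 ≤ i ∧ Commute (g ^ i) x := by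
  refine ⟨d.natAbs, Int.natAbs_pos.mpr hd, ?_⟩
  have hpow : g ^ d.natAbs = (g ^ d) ^ d.sign := by
    rw [← zpow_natCast, ← Int.sign_mul_self_eq_natAbs, mul_comm, zpow_mul]
  rw [hpow]
  exact h.zpow_left _

end ConjZPow

lemma Function.Periodic.finite_range_of_int {α : Type*} {f : ℤ → α} {c : ℤ}
    (h : Periodic f c) (hc : 0 < c) : (range f).Finite := by
  refine ((finite_Ico 0 c).image f).subset ?_
  rintro _ ⟨n, rfl⟩
  obtain ⟨m, hm, hfm⟩ := h.exists_mem_Ico₀ hc n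
  exact ⟨m, hm, hfm.symm⟩

theorem virtualCentralizer_zpowers_eq_iUnion_centralizers_general {Γ : Type*} [Group Γ]
    (g : Γ) :
    {x : Γ | Set.Finite (Set.range fun n : ℤ => g ^ n * x * g ^ (-n))} =
      ⋃ i ∈ Set.Ici (1 : ℕ), (Subgroup.centralizer {g ^ i} : Set Γ) := by
  ext x
  simp only [mem_ofPred_eq, mem_iUnion, mem_Ici, SetLike.mem_coe,
    Subgroup.mem_centralizer_singleton_iff, exists_prop]
  constructor
  · intro hfin
    obtain ⟨m, n, hmn, hne⟩ :=
      not_injective_iff.mp fun hinj => infinite_range_of_injective hinj hfin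
    obtain ⟨i, hi, hcomm⟩ := ((zpow_mul_mul_zpow_neg_eq_iff_commute g x m n).mp hmn)
      |>.exists_pow_of_zpow (sub_ne_zero.mpr hne)
    exact ⟨i, hi, hcomm.eq.symm⟩
  · rintro ⟨i, hi, hcomm⟩
    have hcomm' : Commute (g ^ (i : ℤ)) x := by rw [zpow_natCast]; exact hcomm.symm
    exact (periodic_zpow_mul_mul_zpow_neg_of_commute hcomm').finite_range_of_int (by omega)

/-- For an element `g` of infinite order, the virtual centralizer of `⟨g⟩`
equals `⋃_{i ≥ 1} C_Γ(g^i)`. -/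
theorem virtualCentralizer_zpowers_eq_iUnion_centralizers {Γ : Type*} [Group Γ]
    (g : Γ) (hg : ¬ IsOfFinOrder g) :
    {x : Γ | Set.Finite (Set.range fun n : ℤ => g ^ n * x * g ^ (-n))} =
      ⋃ i ∈ Set.Ici (1 : ℕ), (Subgroup.centralizer {g ^ i} : Set Γ) :=
  virtualCentralizer_zpowers_eq_iUnion_centralizers_general g
end

section
/- Let Γ be a group and B ≤ Γ a malnormal subgroup (g B g^{-1} ∩ B = {1} for all g ∈ Γ \ B). Then for any infinite subgroup A ≤ B, the virtual centralizer vC_Γ(A) is contained in B. -/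
/-!
Since `A` is infinite but `x` has only finitely many `A`-conjugates, two distinct `a, b ∈ A`
conjugate `x` to the same element, so `b⁻¹ * a` is a nontrivial element of `A ≤ B` commuting
with `x`. An element outside a malnormal subgroup centralizes no nontrivial element of it.
-/

theorem Subgroup.exists_ne_one_commute_of_finite_conjOrbit {G : Type*} [Group G] {A : Subgroup G}
    (hA : (A : Set G).Infinite) {x : G}
    (hx : {y : G | ∃ a ∈ A, y = a * x * a⁻¹}.Finite) : ∃ c ∈ A, c ≠ 1 ∧ Commute x c := by
  obtain ⟨a, ha, b, hb, hab, hconj⟩ := hA.exists_ne_map_eq_of_mapsTo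
    (f := fun a => a * x * a⁻¹) (t := {y | ∃ a ∈ A, y = a * x * a⁻¹}) (fun a ha => ⟨a, ha, rfl⟩) hx
  refine ⟨b⁻¹ * a, A.mul_mem (A.inv_mem hb) ha, fun h => hab (inv_mul_eq_one.mp h).symm, ?_⟩
  calc x * (b⁻¹ * a) = b⁻¹ * (b * x * b⁻¹) * a := by group
    _ = b⁻¹ * (a * x * a⁻¹) * a := by rw [← hconj]
    _ = b⁻¹ * a * x := by group

theorem eq_one_of_commute_of_notMem_malnormal {G : Type*} [Group G] {B : Subgroup G}
    (hmal : ∀ g : G, g ∉ B → ∀ x ∈ B, g * x * g⁻¹ ∈ B → g * x * g⁻¹ = 1)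
    {g c : G} (hg : g ∉ B) (hc : c ∈ B) (hgc : Commute g c) : c = 1 := by
  have hconj : g * c * g⁻¹ = c := hgc.mul_inv_cancel
  rw [← hconj]
  exact hmal g hg c hc (hconj.symm ▸ hc)

/-- If `B` is a malnormal subgroup of `Γ` and `A ≤ B` is infinite, then the
virtual centralizer of `A` is contained in `B`. -/
theorem virtualCentralizer_le_of_malnormal {Γ : Type*} [Group Γ] (B : Subgroup Γ)
    (hmal : ∀ g : Γ, g ∉ B → ∀ x ∈ B, g * x * g⁻¹ ∈ B → g * x * g⁻¹ = 1)
    (A : Subgroup Γ) (hAB : A ≤ B) (hAinf : (A : Set Γ).Infinite) :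
    {x : Γ | Set.Finite {y : Γ | ∃ a ∈ A, y = a * x * a⁻¹}} ⊆ (B : Set Γ) := by
  intro x hx
  by_contra hxB
  obtain ⟨c, hcA, hc1, hxc⟩ := Subgroup.exists_ne_one_commute_of_finite_conjOrbit hAinf hx
  exact hc1 (eq_one_of_commute_of_notMem_malnormal hmal hxB (hAB hcA) hxc)
end

section
/- Let Γ = Γ₁ * Γ₂ be a free product with s ∈ Γ₂ nontrivial and g, g₂, g₃ ∈ Γ₁ nontrivial. Then s g₂ s^{-1} (g s g₃ s^{-1})^i ≠ (g s g₃ s^{-1})^i s g₂ s^{-1} for all i ≥ 1. -/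
/-!
Write `a = s g₂ s⁻¹` and `b = g s g₃ s⁻¹`. Both are reduced words in the free product, `a`
beginning and ending in `Γ₂` and `b` beginning in `Γ₁` and ending in `Γ₂`, so every power `bⁱ`
(`i ≥ 1`) is again such a reduced word. If `a` and `bⁱ` commuted, then `b⁻ⁱ a bⁱ = a`; but the
concatenation of the reduced words for `b⁻ⁱ`, `a` and `bⁱ` is already reduced, hence strictly
longer than `a`, contradicting uniqueness of reduced words.
-/

open Monoid Monoid.Coprod

namespace Monoid.CoprodI.NeWord

variable {ι : Type*}

section Monoid

variable {M : ι → Type*} [∀ i, Monoid (M i)]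

theorem toList_length_eq_of_prod_eq {i j k l : ι} {w : NeWord M i j} {w' : NeWord M k l}
    (h : w.prod = w'.prod) : w.toList.length = w'.toList.length := by
  classical
  have hword : w.toWord = w'.toWord := Word.equiv.symm.injective h
  exact congrArg (·.toList.length) hword

theorem exists_prod_eq_pow_succ {i j : ι} (w : NeWord M i j) (hji : j ≠ i) (n : ℕ) :
    ∃ w' : NeWord M i j, w'.prod = w.prod ^ (n + 1) := by
  induction n with
  | zero => exact ⟨w, (pow_one _).symm⟩
  | succ n ih =>
    obtain ⟨w', hw'⟩ := ih
    exact ⟨w.append hji w', by rw [append_prod, hw', ← pow_succ']⟩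

end Monoid

theorem inv_prod_mul_prod_mul_prod_ne {G : ι → Type*} [∀ i, Group (G i)] {i j k l : ι}
    (w : NeWord G i k) (a : NeWord G j l) (hij : i ≠ j) (hli : l ≠ i) :
    w.prod⁻¹ * a.prod * w.prod ≠ a.prod := by
  intro h
  have hprod : ((w.inv.append hij a).append hli w).prod = a.prod := by
    rw [append_prod, append_prod, inv_prod, h]
  have hlen := toList_length_eq_of_prod_eq hprod
  simp only [toList, List.length_append] at hlen
  have := List.length_pos_iff.2 w.toList_ne_nil
  omega

end Monoid.CoprodI.NeWord

namespace Monoid.CoprodI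

open NeWord

theorem not_commute_conj_mul_conj_pow {ι : Type*} {G : ι → Type*} [∀ i, Group (G i)]
    {i j : ι} (hij : i ≠ j) {s : G j} (hs : s ≠ 1) {g g₂ g₃ : G i}
    (hg : g ≠ 1) (hg₂ : g₂ ≠ 1) (hg₃ : g₃ ≠ 1) {n : ℕ} (hn : n ≠ 0) :
    ¬Commute (of s * of g₂ * (of s)⁻¹) ((of g * of s * of g₃ * (of s)⁻¹) ^ n) := by
  have hs' : s⁻¹ ≠ 1 := inv_ne_one.2 hs
  let a : NeWord G j j :=
    ((singleton s hs).append hij.symm (singleton g₂ hg₂)).append hij (singleton s⁻¹ hs')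
  let b : NeWord G i j :=
    (((singleton g hg).append hij (singleton s hs)).append hij.symm
      (singleton g₃ hg₃)).append hij (singleton s⁻¹ hs')
  have ha : a.prod = of s * of g₂ * (of s)⁻¹ := by simp [a, append_prod]
  have hb : b.prod = of g * of s * of g₃ * (of s)⁻¹ := by simp [b, append_prod]
  obtain ⟨m, rfl⟩ := Nat.exists_eq_succ_of_ne_zero hn
  obtain ⟨w, hw⟩ := b.exists_prod_eq_pow_succ hij.symm m
  intro hcomm
  apply inv_prod_mul_prod_mul_prod_ne w a hij hij.symm
  rw [hw, hb, ha, mul_assoc, hcomm.eq, inv_mul_cancel_left]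

end Monoid.CoprodI

universe u v

namespace Monoid.Coprod

variable (G : Type u) (H : Type v) [Group G] [Group H]

/-- `G ∗ H` as an indexed free product over `Bool` (`false ↦ G`, `true ↦ H`); the factors are
lifted to a common universe because `CoprodI` needs a family of types in one universe. -/
abbrev factors : Bool → Type max u v := fun b => cond b (ULift.{u} H) (ULift.{v} G)

instance : ∀ b, Group (factors G H b)
  | true => inferInstanceAs (Group (ULift H))
  | false => inferInstanceAs (Group (ULift G))

def toCoprodI : G ∗ H →* CoprodI (factors G H) :=
  lift ((CoprodI.of (i := false)).comp (MulEquiv.ulift.symm : G ≃* ULift.{v} G).toMonoidHom)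
    ((CoprodI.of (i := true)).comp (MulEquiv.ulift.symm : H ≃* ULift.{u} H).toMonoidHom)

variable {G H}

@[simp]
theorem toCoprodI_inl (x : G) : toCoprodI G H (inl x) = CoprodI.of (i := false) (ULift.up.{v} x) :=
  rfl

@[simp]
theorem toCoprodI_inr (x : H) : toCoprodI G H (inr x) = CoprodI.of (i := true) (ULift.up.{u} x) :=
  rfl

end Monoid.Coprod

/-- In `Γ = Γ₁ ∗ Γ₂` with `s ∈ Γ₂` nontrivial and `g, g₂, g₃ ∈ Γ₁`
nontrivial, `s g₂ s⁻¹ (g s g₃ s⁻¹)^i ≠ (g s g₃ s⁻¹)^i s g₂ s⁻¹` for all `i ≥ 1`. -/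
theorem free_product_noncommuting_identity {Γ₁ Γ₂ : Type*} [Group Γ₁] [Group Γ₂]
    (s : Γ₂) (hs : s ≠ 1) (g g₂ g₃ : Γ₁) (hg : g ≠ 1) (hg₂ : g₂ ≠ 1) (hg₃ : g₃ ≠ 1) :
    ∀ i : ℕ, 1 ≤ i →
      Monoid.Coprod.inr s * Monoid.Coprod.inl g₂ * (Monoid.Coprod.inr s : Γ₁ ∗ Γ₂)⁻¹ *
          (Monoid.Coprod.inl g * Monoid.Coprod.inr s * Monoid.Coprod.inl g₃ *
            (Monoid.Coprod.inr s : Γ₁ ∗ Γ₂)⁻¹) ^ i ≠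
        (Monoid.Coprod.inl g * Monoid.Coprod.inr s * Monoid.Coprod.inl g₃ *
            (Monoid.Coprod.inr s : Γ₁ ∗ Γ₂)⁻¹) ^ i *
          (Monoid.Coprod.inr s * Monoid.Coprod.inl g₂ *
            (Monoid.Coprod.inr s : Γ₁ ∗ Γ₂)⁻¹) := by
  intro i hi h
  have hcomm := congrArg (Coprod.toCoprodI Γ₁ Γ₂) h
  simp only [map_mul, map_pow, map_inv, Coprod.toCoprodI_inl, Coprod.toCoprodI_inr] at hcomm
  exact CoprodI.not_commute_conj_mul_conj_pow Bool.false_ne_true (ULift.up_injective.ne hs)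
    (ULift.up_injective.ne hg) (ULift.up_injective.ne hg₂) (ULift.up_injective.ne hg₃)
    (Nat.one_le_iff_ne_zero.1 hi) hcomm
end

section
/- In Γ = ℤ * ℤ/2ℤ = ⟨t⟩ * ⟨s⟩, for γ, g ∈ Γ, the element s γ g s g^{-1} γ^{-1} is trivial if and only if γg ∈ ⟨s⟩ = {1, s}; and whenever it is nontrivial, it has infinite order. -/
/-!
`ℤ * K` is the semidirect product `F(K) ⋊ K`, where `F(K)` is free on the conjugates `k t k⁻¹`
and `K` permutes them by left translation. For `K = ℤ/2` the element `s w s w⁻¹` maps to `1` in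
`K`, so it lies in the free group `F(K)`, which is torsion-free. If `w` commutes with `s`, the
`F(K)`-component of `w` is fixed by translation by `s`; translating the generators of a reduced
word gives a reduced word, so that component is trivial and `w ∈ K = ⟨s⟩`.
-/

namespace FreeGroup

variable {α β : Type*}

theorem toWord_map_of_injective [DecidableEq α] [DecidableEq β] {e : α → β}
    (he : Function.Injective e) (x : FreeGroup α) :
    (map e x).toWord = x.toWord.map fun p => (e p.1, p.2) := by
  conv_lhs => rw [← mk_toWord (x := x), map.mk, toWord_mk]
  refine IsReduced.reduce_eq (List.isChain_map_of_isChain _ ?_ isReduced_toWord)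
  exact fun a b hab heq => hab (he heq)

theorem eq_one_of_map_eq_self {e : α → α} (he : Function.Injective e) (hfix : ∀ a, e a ≠ a)
    {x : FreeGroup α} (hx : map e x = x) : x = 1 := by
  classical
  rw [← toWord_eq_nil_iff]
  have hword := congrArg toWord hx
  rw [toWord_map_of_injective he] at hword
  cases hw : x.toWord with
  | nil => rfl
  | cons p l =>
    rw [hw, List.map_cons, List.cons.injEq] at hword
    exact absurd (congrArg Prod.fst hword.1) (hfix p.1)

variable (K : Type*) [Group K]

def translate : K →* MulAut (FreeGroup K) where
  toFun k := freeGroupCongr (Equiv.mulLeft k)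
  map_one' := by ext; simp
  map_mul' k l := by ext; simp [map.comp, Function.comp_def]

@[simp]
theorem translate_apply (k : K) (x : FreeGroup K) : translate K k x = map (k * ·) x := rfl

end FreeGroup

namespace Monoid.Coprod

variable {K : Type*} [Group K]

def toSemidirectProduct : Multiplicative ℤ ∗ K →* FreeGroup K ⋊[FreeGroup.translate K] K :=
  lift (zpowersHom _ (SemidirectProduct.inl (.of 1))) SemidirectProduct.inr

def ofSemidirectProduct : FreeGroup K ⋊[FreeGroup.translate K] K →* Multiplicative ℤ ∗ K :=
  SemidirectProduct.lift (FreeGroup.lift fun k => inr k * inl (.ofAdd 1) * inr k⁻¹) inr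
    fun k => FreeGroup.ext_hom _ _ fun l => by simp [mul_assoc]

@[simp]
theorem toSemidirectProduct_inr (k : K) : toSemidirectProduct (inr k) = SemidirectProduct.inr k :=
  lift_apply_inr _ _ k

theorem ofSemidirectProduct_toSemidirectProduct (x : Multiplicative ℤ ∗ K) :
    ofSemidirectProduct (toSemidirectProduct x) = x := by
  suffices (ofSemidirectProduct (K := K)).comp toSemidirectProduct = .id _ from
    DFunLike.congr_fun this x
  exact hom_ext (MonoidHom.ext_mint (by simp [toSemidirectProduct, ofSemidirectProduct]))
    (by ext; simp [toSemidirectProduct, ofSemidirectProduct])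

theorem toSemidirectProduct_injective :
    Function.Injective (toSemidirectProduct : Multiplicative ℤ ∗ K → _) :=
  Function.LeftInverse.injective ofSemidirectProduct_toSemidirectProduct

theorem right_toSemidirectProduct (x : Multiplicative ℤ ∗ K) :
    (toSemidirectProduct x).right = snd x := by
  suffices SemidirectProduct.rightHom.comp toSemidirectProduct = (snd : _ →* K) from
    DFunLike.congr_fun this x
  exact hom_ext (MonoidHom.ext_mint (by simp [toSemidirectProduct]))
    (by ext; simp [toSemidirectProduct])

theorem eq_one_of_isOfFinOrder_of_snd_eq_one {x : Multiplicative ℤ ∗ K} (hx : IsOfFinOrder x)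
    (h : snd x = 1) : x = 1 := by
  obtain ⟨f, hf⟩ : ∃ f, toSemidirectProduct x = SemidirectProduct.inl f := by
    refine ⟨(toSemidirectProduct x).left, ?_⟩
    conv_lhs => rw [← SemidirectProduct.inl_left_mul_inr_right (toSemidirectProduct x)]
    rw [right_toSemidirectProduct, h, _root_.map_one, mul_one]
  have hf_one : f = 1 := by
    rw [← isOfFinOrder_iff_eq_one,
      ← (SemidirectProduct.inl_injective (φ := FreeGroup.translate K)).isOfFinOrder_iff, ← hf]
    exact toSemidirectProduct_injective.isOfFinOrder_iff.2 hx
  apply toSemidirectProduct_injective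
  rw [hf, hf_one, _root_.map_one, _root_.map_one]

theorem exists_eq_inr_of_commute {k : K} (hk : k ≠ 1) {w : Multiplicative ℤ ∗ K}
    (h : Commute (inr k) w) : ∃ r, w = inr r := by
  set y := toSemidirectProduct w with hy
  have hfix : FreeGroup.map (k * ·) y.left = y.left := by
    simpa using congrArg SemidirectProduct.left (h.map toSemidirectProduct).eq
  have hleft : y.left = 1 :=
    FreeGroup.eq_one_of_map_eq_self (mul_right_injective k) (fun a => by simpa using hk) hfix
  refine ⟨y.right, ?_⟩
  rw [← ofSemidirectProduct_toSemidirectProduct w, ← hy,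
    ← SemidirectProduct.inl_left_mul_inr_right y, hleft]
  simp [ofSemidirectProduct]

end Monoid.Coprod

open Monoid.Coprod
open scoped commutatorElement

theorem mem_zpowers_of_commute_inr_ofAdd_one {w : Multiplicative ℤ ∗ Multiplicative (ZMod 2)}
    (h : Commute (inr (.ofAdd 1)) w) : w ∈ Subgroup.zpowers (inr (.ofAdd 1)) := by
  obtain ⟨r, rfl⟩ := exists_eq_inr_of_commute (by decide) h
  have hr : r = 1 ∨ r = .ofAdd 1 := by clear h; revert r; decide
  rcases hr with rfl | rfl
  · simp
  · exact Subgroup.mem_zpowers _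

/-- In `Γ = ℤ * ℤ/2ℤ = ⟨t⟩ * ⟨s⟩`, the element `s γ g s g⁻¹ γ⁻¹` is trivial
iff `γ g ∈ ⟨s⟩`, and whenever nontrivial it has infinite order. -/
theorem s_gamma_g_s_inv_trivial_or_infinite_order :
    ∀ s : Multiplicative ℤ ∗ Multiplicative (ZMod 2),
      s = Monoid.Coprod.inr (Multiplicative.ofAdd (1 : ZMod 2)) →
      ∀ γ g : Multiplicative ℤ ∗ Multiplicative (ZMod 2),
        (s * γ * g * s * g⁻¹ * γ⁻¹ = 1 ↔ γ * g ∈ Subgroup.zpowers s) ∧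
        (s * γ * g * s * g⁻¹ * γ⁻¹ ≠ 1 → ¬ IsOfFinOrder (s * γ * g * s * g⁻¹ * γ⁻¹)) := by
  intro s hs γ g
  have hs_inv : s⁻¹ = s := by rw [hs, ← map_inv]; rfl
  have hcommutator : s * γ * g * s * g⁻¹ * γ⁻¹ = ⁅s, γ * g⁆ := by
    rw [commutatorElement_def, hs_inv]; group
  rw [hcommutator, commutatorElement_eq_one_iff_commute]
  refine ⟨⟨fun h => hs ▸ mem_zpowers_of_commute_inr_ofAdd_one (hs ▸ h), fun hw => ?_⟩,
    fun hne hfin => hne (eq_one_of_isOfFinOrder_of_snd_eq_one hfin ?_)⟩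
  · obtain ⟨k, hk⟩ := Subgroup.mem_zpowers_iff.1 hw
    exact hk ▸ (Commute.refl s).zpow_right k
  · rw [map_commutatorElement, commutatorElement_eq_one_iff_commute]
    exact Commute.all _ _
end

section
/- In Γ = ℤ * ℤ/2ℤ = ⟨t⟩ * ⟨s⟩, the conjugacy class {γ^{-1} s γ : γ ∈ Γ} is a relatively i.c.c. set: for every nontrivial g ∈ Γ, the set {γ^{-1} s γ · g · γ^{-1} s γ : γ ∈ Γ} is infinite. -/
/-!
Every `g : Γ` has a unique normal form `t^a s t^{x₁} s ⋯ s t^{x_k}` in which only the last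
exponent may vanish: existence by induction on `g`, uniqueness because Γ acts on normal words
(van der Waerden's trick) and `g` is recovered by acting on the empty word. Conjugating by
`γ = t^m` turns the normal form of `g` into one that begins with `t^{-m}` (for `m` large when
`g ∉ ⟨t⟩`), so different `m` give different elements.
-/

open Monoid.Coprod

namespace IntFreeProdZModTwo

local notation "Γ" => Multiplicative ℤ ∗ Multiplicative (ZMod 2)

def t : Γ := inl (.ofAdd 1)

def s : Γ := inr (.ofAdd 1)

theorem t_zpow (k : ℤ) : t ^ k = inl (.ofAdd k) := by
  rw [t, ← map_zpow, ← ofAdd_zsmul, smul_eq_mul, mul_one]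

theorem s_mul_self : s * s = 1 := by
  rw [s, ← map_mul]
  exact map_one _

theorem eq_one_or_eq_ofAdd_one (z : Multiplicative (ZMod 2)) : z = 1 ∨ z = .ofAdd 1 := by
  revert z; decide

/-- `(a, [x₁, …, x_k])` encodes `t^a s t^{x₁} ⋯ s t^{x_k}`. -/
abbrev Word := ℤ × List ℤ

def evalTail (l : List ℤ) : Γ := (l.map fun x => s * t ^ x).prod

def eval (w : Word) : Γ := t ^ w.1 * evalTail w.2

def IsNormal (w : Word) : Prop := ∀ x ∈ w.2.dropLast, x ≠ 0

def sWord (w : Word) : Word :=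
  if w.1 = 0 then
    match w.2 with
    | [] => (0, [0])
    -- the fallback `w` only occurs on non-normal words; it keeps `sWord` an involution
    | x :: l => if x ≠ 0 ∨ l = [] then (x, l) else w
  else (0, w.1 :: w.2)

theorem sWord_involutive : Function.Involutive sWord := by
  rintro ⟨a, l⟩
  by_cases ha : a = 0
  · subst ha
    rcases l with _ | ⟨x, l⟩
    · simp [sWord]
    · by_cases hx : x = 0
      · by_cases hl : l = [] <;> simp [sWord, hx, hl]
      · simp [sWord, hx]
  · simp [sWord, ha]

theorem IsNormal.of_cons {a x : ℤ} {l : List ℤ} (h : IsNormal (a, x :: l)) (b : ℤ) :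
    IsNormal (b, l) := fun y hy =>
  h y (by cases l <;> simp_all [List.dropLast])

theorem IsNormal.head_ne_zero_or_tail_eq_nil {a x : ℤ} {l : List ℤ} (h : IsNormal (a, x :: l)) :
    x ≠ 0 ∨ l = [] := by
  rcases l with _ | ⟨y, l⟩
  · exact .inr rfl
  · exact .inl (h x (by simp))

theorem isNormal_sWord {w : Word} (hw : IsNormal w) : IsNormal (sWord w) := by
  rcases w with ⟨a, l⟩
  by_cases ha : a = 0
  · subst ha
    rcases l with _ | ⟨x, l⟩
    · simp [IsNormal, sWord]
    · simpa [sWord, hw.head_ne_zero_or_tail_eq_nil] using hw.of_cons x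
  · rintro y hy
    rcases l with _ | ⟨x, l⟩
    · simp [sWord, ha] at hy
    · simp only [sWord, ha, if_false, List.dropLast_cons_cons, List.mem_cons] at hy
      rcases hy with rfl | hy
      exacts [ha, hw y hy]

theorem eval_sWord {w : Word} (hw : IsNormal w) : eval (sWord w) = s * eval w := by
  rcases w with ⟨a, l⟩
  by_cases ha : a = 0
  · subst ha
    rcases l with _ | ⟨x, l⟩
    · simp [sWord, eval, evalTail]
    · simp [sWord, hw.head_ne_zero_or_tail_eq_nil, eval, evalTail, ← mul_assoc, s_mul_self]
  · simp [sWord, ha, eval, evalTail, mul_assoc]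

theorem exists_isNormal_eval_eq (g : Γ) : ∃ w, IsNormal w ∧ eval w = g := by
  induction g using Monoid.Coprod.induction_on' with
  | one => exact ⟨(0, []), by simp [IsNormal], by simp [eval, evalTail]⟩
  | inl_mul k g ih =>
    obtain ⟨⟨a, l⟩, hw, rfl⟩ := ih
    refine ⟨(k.toAdd + a, l), hw, ?_⟩
    rw [eval, eval, zpow_add, t_zpow, ofAdd_toAdd, mul_assoc]
  | inr_mul z g ih =>
    obtain ⟨w, hw, rfl⟩ := ih
    rcases eq_one_or_eq_ofAdd_one z with rfl | rfl
    · exact ⟨w, hw, by rw [map_one, one_mul]⟩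
    · exact ⟨sWord w, isNormal_sWord hw, eval_sWord hw⟩

def tHom : Multiplicative ℤ →* Function.End Word where
  toFun k w := (w.1 + k.toAdd, w.2)
  map_one' := funext fun w => Prod.ext (add_zero w.1) rfl
  map_mul' k k' := funext fun w => Prod.ext
    (show w.1 + (k * k').toAdd = w.1 + k'.toAdd + k.toAdd by rw [toAdd_mul]; ring) rfl

def sHom : Multiplicative (ZMod 2) →* Function.End Word where
  toFun z w := if z = 1 then w else sWord w
  map_one' := funext fun w => if_pos rfl
  map_mul' z z' := funext fun w => by
    show (if z * z' = 1 then w else sWord w) =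
      if z = 1 then (if z' = 1 then w else sWord w) else sWord (if z' = 1 then w else sWord w)
    have h : Multiplicative.ofAdd (1 : ZMod 2) ≠ 1 := by decide
    have h' : Multiplicative.ofAdd (1 : ZMod 2) * .ofAdd 1 = 1 := by decide
    rcases eq_one_or_eq_ofAdd_one z with rfl | rfl <;>
      rcases eq_one_or_eq_ofAdd_one z' with rfl | rfl <;>
      simp only [one_mul, mul_one, h, h', if_true, if_false, sWord_involutive w]

def act : Γ →* Function.End Word := lift tHom sHom

theorem act_mul_apply (g h : Γ) (w : Word) : act (g * h) w = act g (act h w) := by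
  rw [map_mul]; rfl

theorem act_t_zpow (k : ℤ) (w : Word) : act (t ^ k) w = (w.1 + k, w.2) := by
  rw [t_zpow, act, lift_apply_inl]; rfl

theorem act_s (w : Word) : act s w = sWord w := by
  rw [s, act, lift_apply_inr]
  exact if_neg (t := w) (e := sWord w) (show Multiplicative.ofAdd (1 : ZMod 2) ≠ 1 by decide)

theorem act_evalTail {l : List ℤ} (hl : IsNormal (0, l)) : act (evalTail l) (0, []) = (0, l) := by
  induction l with
  | nil => rfl
  | cons x l ih =>
    rw [evalTail, List.map_cons, List.prod_cons, ← evalTail, act_mul_apply, act_mul_apply,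
      ih (hl.of_cons 0), act_t_zpow, act_s, zero_add]
    rcases hl.head_ne_zero_or_tail_eq_nil with hx | rfl
    · simp [sWord, hx]
    · by_cases hx : x = 0 <;> simp [sWord, hx]

theorem act_eval {w : Word} (hw : IsNormal w) : act (eval w) (0, []) = w := by
  rw [eval, act_mul_apply, act_evalTail (l := w.2) hw, act_t_zpow, zero_add]

theorem eval_injOn : Set.InjOn eval {w | IsNormal w} := fun w hw w' hw' h => by
  rw [← act_eval hw, ← act_eval hw', h]

theorem infinite_range_eval {ι : Type*} [Infinite ι] {a : ι → ℤ} (ha : Function.Injective a)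
    {l : ι → List ℤ} (hl : ∀ i, IsNormal (a i, l i)) :
    (Set.range fun i => eval (a i, l i)).Infinite :=
  Set.infinite_range_of_injective fun i j h => ha (congrArg Prod.fst (eval_injOn (hl i) (hl j) h))

theorem isNormal_cons_append_concat (a b c m : ℤ) {l : List ℤ} (hl : ∀ x ∈ l, x ≠ 0)
    (hb : b ≠ 0) (hc : c ≠ 0) : IsNormal (a, b :: (l ++ [c]) ++ [m]) := by
  intro x hx
  simp only [List.dropLast_concat, List.mem_cons, List.mem_append,
    List.not_mem_nil, or_false] at hx
  rcases hx with rfl | hx | rfl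
  exacts [hb, hl x hx, hc]

theorem conj_eval_nil (b m : ℤ) :
    (t ^ m)⁻¹ * s * t ^ m * eval (b, []) * ((t ^ m)⁻¹ * s * t ^ m) = eval (-m, [b, m]) := by
  simp only [eval, evalTail, List.map_cons, List.map_nil, List.prod_cons, List.prod_nil]
  group

theorem conj_eval_concat (b c m : ℤ) (l : List ℤ) :
    (t ^ m)⁻¹ * s * t ^ m * eval (b, l ++ [c]) * ((t ^ m)⁻¹ * s * t ^ m) =
      eval (-m, (m + b) :: (l ++ [c - m]) ++ [m]) := by
  simp only [eval, evalTail, List.map_cons, List.map_nil, List.map_append, List.prod_cons,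
    List.prod_nil, List.prod_append]
  group

end IntFreeProdZModTwo

open IntFreeProdZModTwo in
/-- In `Γ = ℤ * ℤ/2ℤ = ⟨t⟩ * ⟨s⟩`, the conjugacy class of `s` is a
relatively i.c.c. set: for every nontrivial `g`, the set
`{γ⁻¹ s γ · g · γ⁻¹ s γ : γ ∈ Γ}` is infinite. -/
theorem conjugacy_class_of_s_rel_icc :
    ∀ s : Multiplicative ℤ ∗ Multiplicative (ZMod 2),
      s = Monoid.Coprod.inr (Multiplicative.ofAdd (1 : ZMod 2)) →
      ∀ g : Multiplicative ℤ ∗ Multiplicative (ZMod 2), g ≠ 1 →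
        (Set.range fun γ : Multiplicative ℤ ∗ Multiplicative (ZMod 2) =>
          γ⁻¹ * s * γ * g * (γ⁻¹ * s * γ)).Infinite := by
  rintro _ rfl g hg
  obtain ⟨⟨b, L⟩, hnormal, rfl⟩ := exists_isNormal_eval_eq g
  rcases List.eq_nil_or_concat' L with rfl | ⟨L, c, rfl⟩
  · have hb : b ≠ 0 := by
      rintro rfl
      exact hg (by simp [eval, evalTail])
    refine (infinite_range_eval neg_injective (l := fun m => [b, m]) fun m => ?_).mono ?_
    · simpa [IsNormal] using hb
    · rintro _ ⟨m, rfl⟩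
      exact ⟨t ^ m, conj_eval_nil b m⟩
  · have hL : ∀ x ∈ L, x ≠ 0 := fun x hx => hnormal x (by simpa using hx)
    have : Infinite (Set.Ioi (|b| + |c|)) := (Set.Ioi_infinite _).to_subtype
    refine (infinite_range_eval (neg_injective.comp Subtype.val_injective)
      (l := fun m : Set.Ioi (|b| + |c|) => (m + b) :: (L ++ [c - m]) ++ [m.1])
      fun ⟨m, hm⟩ => ?_).mono ?_
    · have := Set.mem_Ioi.mp hm
      exact isNormal_cons_append_concat _ _ _ _ hL (by grind) (by grind)
    · rintro _ ⟨⟨m, -⟩, rfl⟩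
      exact ⟨t ^ m, conj_eval_concat b c m L⟩
end

section
/- Writing Γ = F₂ ⋊_σ ℤ/2ℤ where σ_s swaps the two free generators of F₂: for every nontrivial g' ∈ F₂, the set {γ^{-1} σ_s(γ) g' σ_s(γ)^{-1} γ : γ ∈ F₂} is infinite. -/
/-!
Take `γ = aⁿ`, so that `σ γ = bⁿ` and the twisted conjugate is `a⁻ⁿ bⁿ g' b⁻ⁿ aⁿ`. If only finitely
many values occurred, three exponents `n < n + k < n + l` would give the same value, and then
`h = bⁿ g' b⁻ⁿ` commutes with both `b⁻ᵏ aᵏ` and `b⁻ˡ aˡ`. Sanov's representation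
`a ↦ [[1, 2], [0, 1]]`, `b ↦ [[1, 0], [2, 1]]` is faithful (ping-pong on `ℤ²`) and sends `b⁻ᵏ aᵏ`
to `[[1, s], [-s, 1 - s²]]` with `s = 2k`. A matrix commuting with two of these is scalar, so the
image of `h²` is `1`. Hence `h² = 1`, so `h = 1` because free groups are torsion-free, and `g' = 1`.
-/

open Function Matrix
open scoped Pointwise MatrixGroups

theorem FreeGroup.injective_lift_of_zpow_smul_subset {ι G α : Type*} [Nontrivial ι] [Group G]
    [MulAction G α] (a : ι → G) (X : ι → Set α) (hX : ∀ i, (X i).Nonempty)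
    (hXdisj : Pairwise (Disjoint on X))
    (hpp : Pairwise fun i j => ∀ n : ℤ, n ≠ 0 → a i ^ n • X j ⊆ X i) :
    Injective (FreeGroup.lift a) := by
  have hlift : FreeGroup.lift a = (Monoid.CoprodI.lift fun i => FreeGroup.lift fun _ => a i).comp
      (freeGroupEquivCoprodI (ι := ι)).toMonoidHom := by
    ext i; simp
  rw [hlift, MonoidHom.coe_comp]
  refine Injective.comp ?_ freeGroupEquivCoprodI.injective
  refine Monoid.CoprodI.lift_injective_of_ping_pong _ ?_ X hX hXdisj ?_
  · obtain ⟨i⟩ : Nonempty ι := inferInstance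
    refine Or.inr ⟨i, ?_⟩
    rw [FreeGroup.freeGroupUnitEquivInt.cardinal_eq, Cardinal.mk_denumerable]
    exact Cardinal.natCast_le_aleph0
  · intro i j hij
    refine FreeGroup.freeGroupUnitEquivInt.forall_congr_left.mpr fun n hn => ?_
    have hn0 : n ≠ 0 := by
      rintro rfl
      exact hn (by simp [FreeGroup.freeGroupUnitEquivInt])
    simpa [FreeGroup.freeGroupUnitEquivInt] using hpp hij n hn0

theorem commute_inv_pow_mul_pow_of_eq {G : Type*} [Group G] {x y g : G} {m k : ℕ}
    (h : (x ^ m)⁻¹ * y ^ m * g * (y ^ m)⁻¹ * x ^ m =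
      (x ^ (m + k))⁻¹ * y ^ (m + k) * g * (y ^ (m + k))⁻¹ * x ^ (m + k)) :
    Commute (y ^ m * g * (y ^ m)⁻¹) ((y ^ k)⁻¹ * x ^ k) := by
  set c := y ^ m * g * (y ^ m)⁻¹
  have hc : x ^ k * c * (x ^ k)⁻¹ = y ^ k * c * (y ^ k)⁻¹ :=
    calc x ^ k * c * (x ^ k)⁻¹
        = x ^ (m + k) * ((x ^ m)⁻¹ * y ^ m * g * (y ^ m)⁻¹ * x ^ m) * (x ^ (m + k))⁻¹ := by
          simp only [c]; group
      _ = x ^ (m + k) * ((x ^ (m + k))⁻¹ * y ^ (m + k) * g * (y ^ (m + k))⁻¹ * x ^ (m + k)) *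
            (x ^ (m + k))⁻¹ := by rw [h]
      _ = y ^ k * c * (y ^ k)⁻¹ := by simp only [c]; group
  calc c * ((y ^ k)⁻¹ * x ^ k) = (y ^ k)⁻¹ * (y ^ k * c * (y ^ k)⁻¹) * x ^ k := by group
    _ = (y ^ k)⁻¹ * (x ^ k * c * (x ^ k)⁻¹) * x ^ k := by rw [hc]
    _ = (y ^ k)⁻¹ * x ^ k * c := by group

namespace Matrix.SpecialLinearGroup

section Transvection

variable {ι R : Type*} [DecidableEq ι] [Fintype ι] [CommRing R]

lemma transvection_zpow {i j : ι} (hij : i ≠ j) (b : R) (n : ℤ) :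
    transvection hij b ^ n = transvection hij (n * b) := by
  induction n with
  | zero => simp
  | succ n ih =>
    rw [_root_.zpow_add_one, ih, ← transvection_add]; push_cast; ring_nf
  | pred n ih =>
    rw [_root_.zpow_sub_one, ih, transvection_inv, ← transvection_add]; push_cast; ring_nf

lemma transvection_pow {i j : ι} (hij : i ≠ j) (b : R) (n : ℕ) :
    transvection hij b ^ n = transvection hij (n * b) := by
  simpa using transvection_zpow hij b n

lemma transvection_smul_apply_self {i j : ι} (hij : i ≠ j) (b : R) (v : ι → R) :
    (transvection hij b • v) i = v i + b * v j := by
  change ((transvection hij b : Matrix ι ι R) *ᵥ v) i = _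
  simp [transvection_coe, add_mulVec, single_mulVec_eq]

lemma transvection_smul_apply_of_ne {i j k : ι} (hij : i ≠ j) (b : R) (v : ι → R)
    (hk : k ≠ i) : (transvection hij b • v) k = v k := by
  change ((transvection hij b : Matrix ι ι R) *ᵥ v) k = _
  simp [transvection_coe, add_mulVec, single_mulVec_eq, hk]

lemma abs_lt_abs_transvection_zpow_smul [LinearOrder R] [IsStrictOrderedRing R] {i j : ι}
    (hij : i ≠ j) {c : R} (hc : 2 ≤ |c|) {n : ℤ} (hn : n ≠ 0) {v : ι → R}
    (hv : |v i| < |v j|) :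
    |(transvection hij c ^ n • v) j| < |(transvection hij c ^ n • v) i| := by
  rw [transvection_zpow, transvection_smul_apply_self,
    transvection_smul_apply_of_ne hij _ _ hij.symm]
  have hn1 : (1 : R) ≤ |(n : R)| := by
    rw [← Int.cast_abs]; exact_mod_cast Int.one_le_abs hn
  have hnc : 2 * |v j| ≤ |n * c * v j| := by
    have h2 : 2 ≤ |(n : R)| * |c| := by nlinarith
    rw [abs_mul, abs_mul]
    nlinarith [mul_le_mul_of_nonneg_right h2 (abs_nonneg (v j))]
  calc |v j| < 2 * |v j| - |v i| := by linarith
    _ ≤ |n * c * v j| - |v i| := by linarith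
    _ ≤ |v i + n * c * v j| := by
      have := abs_sub_abs_le_abs_sub (n * c * v j) (-v i)
      rwa [abs_neg, sub_neg_eq_add, add_comm] at this

end Transvection

section Sanov

variable {R : Type*} [CommRing R]

def sanovGen (c : R) : Bool → SL(2, R)
  | false => transvection (zero_ne_one : (0 : Fin 2) ≠ 1) c
  | true => transvection (one_ne_zero : (1 : Fin 2) ≠ 0) c

def sanovPingPongSet [LinearOrder R] : Bool → Set (Fin 2 → R)
  | false => {v | |v 1| < |v 0|}
  | true => {v | |v 0| < |v 1|}

theorem injective_lift_sanovGen [LinearOrder R] [IsStrictOrderedRing R] {c : R}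
    (hc : 2 ≤ |c|) : Injective (FreeGroup.lift (sanovGen c)) := by
  refine FreeGroup.injective_lift_of_zpow_smul_subset _ (sanovPingPongSet (R := R)) ?_ ?_ ?_
  · rintro (_ | _)
    · exact ⟨Pi.single 0 1, by simp [sanovPingPongSet]⟩
    · exact ⟨Pi.single 1 1, by simp [sanovPingPongSet]⟩
  · rintro (_ | _) (_ | _) hij <;> simp only [ne_eq, not_true_eq_false] at hij <;>
      exact Set.disjoint_left.2 fun v h₁ h₂ => lt_asymm h₁ h₂
  · rintro (_ | _) (_ | _) hij n hn <;> simp only [ne_eq, not_true_eq_false] at hij <;>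
      rintro _ ⟨v, hv, rfl⟩
    · exact abs_lt_abs_transvection_zpow_smul zero_ne_one hc hn hv
    · exact abs_lt_abs_transvection_zpow_smul one_ne_zero hc hn hv

lemma lift_sanovGen_inv_pow_mul_pow (c : R) (k : ℕ) :
    FreeGroup.lift (sanovGen c) ((FreeGroup.of true ^ k)⁻¹ * FreeGroup.of false ^ k) =
      transvection (one_ne_zero : (1 : Fin 2) ≠ 0) (-(k * c)) *
        transvection (zero_ne_one : (0 : Fin 2) ≠ 1) (k * c) := by
  simp [sanovGen, transvection_pow, transvection_inv]

lemma coe_transvection_neg_mul_transvection (s : R) :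
    ((transvection (one_ne_zero : (1 : Fin 2) ≠ 0) (-s) *
      transvection (zero_ne_one : (0 : Fin 2) ≠ 1) s : SL(2, R)) : Matrix (Fin 2) (Fin 2) R) =
      !![1, s; -s, 1 - s * s] := by
  ext i j
  fin_cases i <;> fin_cases j <;>
    simp [transvection_coe, Matrix.mul_apply, Fin.sum_univ_two, Matrix.one_apply,
      Matrix.single_apply]
  ring

variable [IsDomain R]

lemma entries_of_commute_transvection_neg_mul_transvection {A : SL(2, R)} {s : R} (hs : s ≠ 0)
    (h : Commute A (transvection (one_ne_zero : (1 : Fin 2) ≠ 0) (-s) *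
      transvection (zero_ne_one : (0 : Fin 2) ≠ 1) s)) :
    A 1 0 = -A 0 1 ∧ A 1 1 = A 0 0 - s * A 0 1 := by
  have hM : (A : Matrix (Fin 2) (Fin 2) R) * !![1, s; -s, 1 - s * s] =
      !![1, s; -s, 1 - s * s] * A := by
    rw [← coe_transvection_neg_mul_transvection, ← coe_mul, ← coe_mul, h.eq]
  have h00 := congrFun (congrFun hM 0) 0
  have h01 := congrFun (congrFun hM 0) 1
  simp [Matrix.mul_apply, Fin.sum_univ_two] at h00 h01
  exact ⟨mul_left_cancel₀ hs (by linear_combination -h00),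
    mul_left_cancel₀ hs (by linear_combination -h01)⟩

theorem sq_eq_one_of_commute_transvection_neg_mul_transvection {A : SL(2, R)} {s t : R}
    (hs : s ≠ 0) (ht : t ≠ 0) (hst : s ≠ t)
    (h₁ : Commute A (transvection (one_ne_zero : (1 : Fin 2) ≠ 0) (-s) *
      transvection (zero_ne_one : (0 : Fin 2) ≠ 1) s))
    (h₂ : Commute A (transvection (one_ne_zero : (1 : Fin 2) ≠ 0) (-t) *
      transvection (zero_ne_one : (0 : Fin 2) ≠ 1) t)) :
    A ^ 2 = 1 := by
  obtain ⟨h10, h11⟩ := entries_of_commute_transvection_neg_mul_transvection hs h₁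
  obtain ⟨-, h11'⟩ := entries_of_commute_transvection_neg_mul_transvection ht h₂
  have h01 : A 0 1 = 0 :=
    (mul_eq_zero.1 (by linear_combination h11 - h11' : (s - t) * A 0 1 = 0)).resolve_left
      (sub_ne_zero.2 hst)
  have hdet : A 0 0 * A 1 1 - A 0 1 * A 1 0 = 1 := by rw [← det_fin_two]; exact A.2
  ext i j
  fin_cases i <;> fin_cases j <;>
    simp [sq, Matrix.mul_apply, Fin.sum_univ_two, h10, h11, h01] at hdet ⊢ <;>
    linear_combination hdet

end Sanov

end Matrix.SpecialLinearGroup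

open Matrix.SpecialLinearGroup in
theorem FreeGroup.eq_one_of_commute_inv_pow_mul_pow {g : FreeGroup Bool} {k l : ℕ} (hk : k ≠ 0)
    (hl : l ≠ 0) (hkl : k ≠ l) (h₁ : Commute g ((of true ^ k)⁻¹ * of false ^ k))
    (h₂ : Commute g ((of true ^ l)⁻¹ * of false ^ l)) : g = 1 := by
  let ρ := FreeGroup.lift (sanovGen (2 : ℤ))
  have hρ : ρ (g ^ 2) = ρ 1 := by
    rw [map_pow, _root_.map_one]
    refine sq_eq_one_of_commute_transvection_neg_mul_transvection (s := k * 2) (t := l * 2)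
      (by omega) (by omega) (by omega) ?_ ?_
    · simpa [ρ, lift_sanovGen_inv_pow_mul_pow] using h₁.map ρ
    · simpa [ρ, lift_sanovGen_inv_pow_mul_pow] using h₂.map ρ
  exact sq_eq_one.1 (injective_lift_sanovGen (by norm_num) hρ)

/-- Let `σ` be the automorphism of `F₂ = FreeGroup Bool` swapping the two
free generators. For every nontrivial `g' ∈ F₂`, the set
`{γ⁻¹ σ(γ) g' σ(γ)⁻¹ γ : γ ∈ F₂}` is infinite. -/
theorem swap_twisted_conjugates_infinite
    (σ : FreeGroup Bool →* FreeGroup Bool)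
    (hσ : σ = FreeGroup.lift (fun x => FreeGroup.of (!x)))
    (g' : FreeGroup Bool) (hg' : g' ≠ 1) :
    (Set.range fun γ : FreeGroup Bool => γ⁻¹ * σ γ * g' * (σ γ)⁻¹ * γ).Infinite := by
  subst hσ
  intro hfin
  set x := FreeGroup.of false
  set y := FreeGroup.of true
  let f (n : ℕ) := (x ^ n)⁻¹ * y ^ n * g' * (y ^ n)⁻¹ * x ^ n
  have : Finite (Set.range f) :=
    (hfin.subset (by rintro _ ⟨n, rfl⟩; exact ⟨x ^ n, by simp [f, x, y]⟩)).to_subtype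
  obtain ⟨v, hv⟩ := Finite.exists_infinite_fiber (Set.rangeFactorization f)
  have hfiber := Set.infinite_coe_iff.1 hv
  have hfv : ∀ n ∈ Set.rangeFactorization f ⁻¹' {v}, f n = v :=
    fun n hn => congrArg Subtype.val hn
  obtain ⟨n, hn⟩ := hfiber.nonempty
  obtain ⟨n₂, hn₂, hlt₂⟩ := hfiber.exists_gt n
  obtain ⟨n₃, hn₃, hlt₃⟩ := hfiber.exists_gt n₂
  obtain ⟨k, rfl⟩ := Nat.exists_eq_add_of_le hlt₂.le
  obtain ⟨l, rfl⟩ := Nat.exists_eq_add_of_le (hlt₂.trans hlt₃).le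
  have hk := commute_inv_pow_mul_pow_of_eq ((hfv _ hn).trans (hfv _ hn₂).symm)
  have hl := commute_inv_pow_mul_pow_of_eq ((hfv _ hn).trans (hfv _ hn₃).symm)
  have hconj := FreeGroup.eq_one_of_commute_inv_pow_mul_pow (by omega) (by omega) (by omega) hk hl
  exact hg' (conj_eq_one_iff.1 hconj)
end
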